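/- arXiv:1210.2107 — 2 statements merged into one kernel-verified Lean document; each statement's English description precedes it below -/
import Mathlib

section
/- Let m ≥ 1 and M = 2^m. Every bijective labeling L : {1,…,M} → GF(2)^m admits a unique factorization L = L_R T, where T is an invertible m×m matrix over GF(2) and L_R is a bijective labeling whose matrix is a reduced column echelon matrix; i.e., there exists a unique pair (L_R, T) with L_R reduced column echelon, T invertible over GF(2), and L(q) = L_R(q)T for all q = 1,…,M. -/
/-- `p` is the pivot of column `l` of the labeling matrix `L`: it is the first
(smallest row index) nonzero entry of that column. -/
def IsPivot {m : ℕ} (L : Fin (2 ^ m) → Fin m → ZMod 2) (p : Fin (2 ^ m)) (l : Fin m) : Prop :=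
  L p l ≠ 0 ∧ ∀ q, q < p → L q l = 0

/-- `L` (viewed as a `2^m × m` binary matrix) is a reduced column echelon matrix:
every column has a pivot, every row containing a pivot has all its other entries zero,
and the pivot of column `l` lies strictly below the pivot of column `l+1`. -/
def IsRCE {m : ℕ} (L : Fin (2 ^ m) → Fin m → ZMod 2) : Prop :=
  ∃ p : Fin m → Fin (2 ^ m),
    (∀ l, IsPivot L (p l) l) ∧
    (∀ l l' : Fin m, l' ≠ l → L (p l) l' = 0) ∧
    (∀ l l' : Fin m, (l' : ℕ) = (l : ℕ) + 1 → p l' < p l)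

/-!
Call `q` a jump of `L` if `L q` is not in the span of the earlier labels `L q'`, `q' < q`.
Jumps are unchanged by `L ↦ L T⁻¹` for invertible `T`, and the jumps of a reduced column
echelon matrix are exactly its pivot rows. So in any factorization `L = L_R T` the pivots of
`L_R` are the jumps of `L` in decreasing order, row `l` of `T` is the label `L (p l)` at the
pivot of column `l`, and `L_R = L T⁻¹`. Conversely, the labels at the jumps form a basis of
`GF(2)^m`, and taking coordinates in this basis gives the factorization.
-/

open Module Submodule Set Function

theorem Fin.strictAnti_of_val_eq_succ {α : Type*} [Preorder α] {m : ℕ} {f : Fin m → α}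
    (h : ∀ l l' : Fin m, (l' : ℕ) = l + 1 → f l' < f l) : StrictAnti f := by
  cases m with
  | zero => exact fun l => l.elim0
  | succ m => exact Fin.strictAnti_iff_succ_lt.2 fun l => h _ _ (by simp)

theorem Pi.eq_single_of_forall_ne_eq_zero {κ R : Type*} [DecidableEq κ] [Zero R] {v : κ → R}
    {l : κ} (h : ∀ l', l' ≠ l → v l' = 0) : v = Pi.single l (v l) := by
  funext l'
  rcases eq_or_ne l' l with rfl | hl
  · simp
  · simp [hl, h l' hl]

section Jumps

variable (K : Type*) {V W ι : Type*} [Semiring K] [AddCommMonoid V] [Module K V]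
  [AddCommMonoid W] [Module K W] [LinearOrder ι]

def jumps (f : ι → V) : Set ι := {i | f i ∉ span K (f '' Iio i)}

variable {K}

theorem jumps_comp_of_injective (g : V →ₗ[K] W) (hg : Injective g) (f : ι → V) :
    jumps K (g ∘ f) = jumps K f := by
  ext i
  change g (f i) ∉ span K ((g ∘ f) '' Iio i) ↔ f i ∉ span K (f '' Iio i)
  rw [image_comp, span_image, ← mem_comap, comap_map_eq_of_injective hg]

theorem mem_span_image_jumps_inter_Iic [WellFoundedLT ι] (f : ι → V) (i : ι) :
    f i ∈ span K (f '' (jumps K f ∩ Iic i)) := by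
  induction i using WellFoundedLT.induction with
  | _ i ih =>
    by_cases hi : i ∈ jumps K f
    · exact subset_span ⟨i, ⟨hi, le_rfl⟩, rfl⟩
    · have hle : span K (f '' Iio i) ≤ span K (f '' (jumps K f ∩ Iic i)) := by
        rw [span_le]
        rintro _ ⟨j, hj, rfl⟩
        exact span_mono (image_mono (inter_subset_inter_right _ (Iic_subset_Iic.2 hj.le))) (ih j hj)
      exact hle (not_not.1 hi)

theorem span_image_jumps [WellFoundedLT ι] (f : ι → V) :
    span K (f '' jumps K f) = span K (range f) := by
  refine le_antisymm (span_mono (image_subset_range _ _)) ?_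
  rw [span_le]
  rintro _ ⟨i, rfl⟩
  exact span_mono (image_mono inter_subset_left) (mem_span_image_jumps_inter_Iic f i)

end Jumps

section DivisionRing

variable {K V ι : Type*} [DivisionRing K] [AddCommGroup V] [Module K V] [LinearOrder ι]

theorem linearIndepOn_jumps [Finite ι] (f : ι → V) : LinearIndepOn K f (jumps K f) := by
  classical
  have := Fintype.ofFinite ι
  suffices ∀ s : Finset ι, LinearIndepOn K f (jumps K f ∩ s) by simpa using this Finset.univ
  intro s
  induction s using Finset.induction_on_max with
  | empty => simp
  | insert a s hlt ih =>
    have ha : a ∉ jumps K f ∩ s := fun h => lt_irrefl a (hlt a h.2)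
    rw [Finset.coe_insert]
    by_cases hj : a ∈ jumps K f
    · rw [inter_insert_of_mem hj, linearIndepOn_insert ha]
      refine ⟨ih, fun hspan => hj (span_mono (image_mono ?_) hspan)⟩
      exact fun x hx => hlt x hx.2
    · rwa [inter_insert_of_notMem hj]

section Enumeration

variable [Fintype ι] {f : ι → V} {n : ℕ}

open Classical in
theorem card_toFinset_jumps (hf : span K (range f) = ⊤) (hn : finrank K V = n) :
    (jumps K f).toFinset.card = n := by
  have hli := (linearIndepOn_jumps (K := K) f).linearIndependent
  rw [toFinset_card, ← hn, ← finrank_span_eq_card hli, ← image_eq_range, span_image_jumps, hf,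
    finrank_top]

variable (hf : span K (range f) = ⊤) (hn : finrank K V = n)

open Classical in
noncomputable def jumpsEnum : Fin n → ι :=
  (jumps K f).toFinset.orderEmbOfFin (card_toFinset_jumps hf hn) ∘ Fin.rev

theorem jumpsEnum_strictAnti : StrictAnti (jumpsEnum hf hn) :=
  (OrderEmbedding.strictMono _).comp_strictAnti Fin.rev_strictAnti

theorem range_jumpsEnum : range (jumpsEnum hf hn) = jumps K f := by
  classical
  rw [jumpsEnum, Fin.rev_surjective.range_comp, Finset.range_orderEmbOfFin, coe_toFinset]

noncomputable def jumpsBasis : Basis (Fin n) K V :=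
  Basis.mk (v := f ∘ jumpsEnum hf hn)
    ((linearIndepOn_range_iff (jumpsEnum_strictAnti hf hn).injective f).1
      (range_jumpsEnum hf hn ▸ linearIndepOn_jumps f))
    (by rw [range_comp, range_jumpsEnum, span_image_jumps, hf])

theorem coe_jumpsBasis : ⇑(jumpsBasis hf hn) = f ∘ jumpsEnum hf hn :=
  Basis.coe_mk _ _

theorem jumpsBasis_repr_eq_zero {q : ι} {l : Fin n} (hq : q < jumpsEnum hf hn l) :
    (jumpsBasis hf hn).repr (f q) l = 0 := by
  have hmem : f q ∈ span K (jumpsBasis hf hn '' (jumpsEnum hf hn ⁻¹' Iic q)) := by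
    rw [coe_jumpsBasis, image_comp, image_preimage_eq_inter_range, range_jumpsEnum, inter_comm]
    exact mem_span_image_jumps_inter_Iic f q
  have hsupp := (Basis.mem_span_image _).1 hmem
  exact Finsupp.notMem_support_iff.1 fun hl => (hsupp hl).not_gt hq

end Enumeration

section Echelon

variable {κ : Type*} [Fintype κ] [DecidableEq κ]

theorem jumps_eq_range_of_echelon (A : ι → κ → K) (p : κ → ι)
    (hpiv : ∀ l, A (p l) l ≠ 0) (habove : ∀ l q, q < p l → A q l = 0)
    (hrow : ∀ l l', l' ≠ l → A (p l) l' = 0) :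
    jumps K A = range p := by
  have hsingle l : A (p l) = Pi.single l (A (p l) l) :=
    Pi.eq_single_of_forall_ne_eq_zero (hrow l)
  ext q
  constructor
  · intro hq
    by_contra hnot
    refine hq ?_
    rw [← Finset.univ_sum_single (A q)]
    refine sum_mem fun l _ => ?_
    by_cases hz : A q l = 0
    · simp [hz]
    · have hlt : p l < q := lt_of_le_of_ne (not_lt.1 (mt (habove l q) hz)) fun h => hnot ⟨l, h⟩
      rw [← div_mul_cancel₀ (A q l) (hpiv l), ← smul_eq_mul, Pi.single_smul, ← hsingle]
      exact smul_mem _ _ (subset_span ⟨p l, hlt, rfl⟩)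
  · rintro ⟨l, rfl⟩ hmem
    have hle : span K (A '' Iio (p l)) ≤ LinearMap.ker (LinearMap.proj l) := by
      rw [span_le]
      rintro _ ⟨q, hq, rfl⟩
      exact habove l q hq
    exact hpiv l (hle hmem)

end Echelon

end DivisionRing

section Labeling

open Matrix

variable {m : ℕ} {L A : Fin (2 ^ m) → Fin m → ZMod 2} {T : Matrix (Fin m) (Fin m) (ZMod 2)}

theorem IsRCE.exists_pivots_eq_jumps (hA : IsRCE A) (hT : IsUnit T)
    (hL : ∀ q, L q = vecMul (A q) T) :
    ∃ p : Fin m → Fin (2 ^ m),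
      StrictAnti p ∧ range p = jumps (ZMod 2) L ∧ ∀ l, T l = L (p l) := by
  obtain ⟨p, hpiv, hrow, hord⟩ := hA
  have hpivot_row l : A (p l) = Pi.single l 1 := by
    rw [Pi.eq_single_of_forall_ne_eq_zero (hrow l)]
    exact congrArg _ ((by decide : ∀ x : ZMod 2, x ≠ 0 → x = 1) _ (hpiv l).1)
  have hLA : L = vecMulLinear T ∘ A := funext hL
  refine ⟨p, Fin.strictAnti_of_val_eq_succ hord, ?_, fun l => ?_⟩
  · rw [hLA, jumps_comp_of_injective _ (vecMul_injective_iff_isUnit.2 hT),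
      jumps_eq_range_of_echelon A p (fun l => (hpiv l).1) (fun l q => (hpiv l).2 q) hrow]
  · rw [hL, hpivot_row, single_vecMul, one_smul, row]

theorem IsRCE.factorization_unique {A' : Fin (2 ^ m) → Fin m → ZMod 2}
    {T' : Matrix (Fin m) (Fin m) (ZMod 2)} (hA : IsRCE A) (hA' : IsRCE A') (hT : IsUnit T)
    (hT' : IsUnit T') (hL : ∀ q, L q = vecMul (A q) T) (hL' : ∀ q, L q = vecMul (A' q) T') :
    A = A' ∧ T = T' := by
  obtain ⟨p, hp, hpL, hTp⟩ := hA.exists_pivots_eq_jumps hT hL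
  obtain ⟨p', hp', hpL', hTp'⟩ := hA'.exists_pivots_eq_jumps hT' hL'
  obtain rfl : p = p' := (hp.range_inj hp').1 (hpL.trans hpL'.symm)
  obtain rfl : T = T' := funext fun l => (hTp l).trans (hTp' l).symm
  exact ⟨funext fun q => vecMul_injective_iff_isUnit.2 hT ((hL q).symm.trans (hL' q)), rfl⟩

theorem exists_isRCE_factorization (hL : Bijective L) :
    ∃ A : Fin (2 ^ m) → Fin m → ZMod 2, ∃ T : Matrix (Fin m) (Fin m) (ZMod 2),
      Bijective A ∧ IsRCE A ∧ IsUnit T ∧ ∀ q, L q = vecMul (A q) T := by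
  have hspan : span (ZMod 2) (range L) = ⊤ := by rw [hL.2.range_eq, span_univ]
  set p := jumpsEnum hspan (finrank_fin_fun (ZMod 2))
  set b := jumpsBasis hspan (finrank_fin_fun (ZMod 2))
  have hbp : ∀ l, b.equivFun (L (p l)) = Pi.single l 1 := fun l => by
    rw [← comp_apply (f := L), ← coe_jumpsBasis, Basis.equivFun_apply, Basis.repr_self,
      Finsupp.single_eq_pi_single]
  refine ⟨b.equivFun ∘ L, Matrix.of b, b.equivFun.bijective.comp hL,
    ⟨p, fun l => ⟨?_, ?_⟩, ?_, ?_⟩, ?_, fun q => ?_⟩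
  · simp [hbp]
  · exact fun q hq => jumpsBasis_repr_eq_zero _ _ hq
  · intro l l' hl
    simp [hbp, hl]
  · exact fun l l' hl => jumpsEnum_strictAnti _ _ (by simp [Fin.lt_def, hl])
  · exact linearIndependent_rows_iff_isUnit.1 b.linearIndependent
  · rw [vecMul_eq_sum]
    exact (b.sum_equivFun (L q)).symm

end Labeling

theorem stmt_3_general (m : ℕ) (L : Fin (2 ^ m) → Fin m → ZMod 2)
    (hL : Function.Bijective L) :
    ∃! P : (Fin (2 ^ m) → Fin m → ZMod 2) × Matrix (Fin m) (Fin m) (ZMod 2),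
      Function.Bijective P.1 ∧ IsRCE P.1 ∧ IsUnit P.2 ∧
        ∀ q, L q = Matrix.vecMul (P.1 q) P.2 := by
  obtain ⟨A, T, hA⟩ := exists_isRCE_factorization hL
  refine ⟨(A, T), hA, fun ⟨A', T'⟩ ⟨_, hA', hT', hL'⟩ => ?_⟩
  obtain ⟨rfl, rfl⟩ := hA'.factorization_unique hA.2.1 hT' hA.2.2.1 hL' hA.2.2.2
  rfl

/-- Every bijective labeling `L` admits a unique factorization
`L = L_R T` with `L_R` a bijective reduced-column-echelon labeling and `T` an invertible
`m×m` matrix over GF(2). -/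
theorem stmt_3 (m : ℕ) (hm : 1 ≤ m) (L : Fin (2 ^ m) → Fin m → ZMod 2)
    (hL : Function.Bijective L) :
    ∃! P : (Fin (2 ^ m) → Fin m → ZMod 2) × Matrix (Fin m) (Fin m) (ZMod 2),
      Function.Bijective P.1 ∧ IsRCE P.1 ∧ IsUnit P.2 ∧
        ∀ q, L q = Matrix.vecMul (P.1 q) P.2 :=
  stmt_3_general m L hL
end

section
/- Let m ≥ 2, M = 2^m, Δ > 0, and consider the M-PAM constellation x_q = −(M+1−2q)Δ ∈ ℝ, q = 1,…,M, labeled by the NBC N_m. Then for every l = 0,1,…,m−1 the minimum intra-Euclidean distance at level l equals δ_l = 2^{l+1}Δ; in particular δ_0 < δ_1 < ⋯ < δ_{m−1}, so the NBC follows the set-partitioning principle for M-PAM. -/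
/-- The natural binary code (NBC) of order `m`. -/
def NBC (m : ℕ) : Fin (2 ^ m) → Fin m → ZMod 2 :=
  fun q l => if Nat.testBit (q : ℕ) (m - 1 - (l : ℕ)) then 1 else 0

/-- The `M`-PAM constellation point of (0-indexed) index `q`: `x_q = −(M+1−2(q+1))Δ`. -/
noncomputable def pamPoint (m : ℕ) (Δ : ℝ) (q : Fin (2 ^ m)) : ℝ :=
  -(((2 : ℝ) ^ m + 1 - 2 * ((q : ℕ) + 1))) * Δ

/-- The set of Euclidean distances between distinct `M`-PAM points whose NBC labels agree
in the last `l` bit positions; its least element is `δ_l`. -/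
noncomputable def pamDeltaSet (m : ℕ) (Δ : ℝ) (l : ℕ) : Set ℝ :=
  {d : ℝ | ∃ q q' : Fin (2 ^ m), q ≠ q' ∧
    (∀ j : Fin m, m - l ≤ (j : ℕ) → NBC m q j = NBC m q' j) ∧
    d = |pamPoint m Δ q - pamPoint m Δ q'|}

lemma ite_zmod_eq_iff (b b' : Bool) :
    ((if b then (1:ZMod 2) else 0) = (if b' then 1 else 0)) ↔ b = b' := by
  cases b <;> cases b' <;> decide

/-- For `M`-PAM labeled by the NBC, the minimum intra-Euclidean
distance at level `l` equals `δ_l = 2^{l+1}Δ`; in particular `δ_0 < δ_1 < ⋯ < δ_{m−1}`,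
so the NBC follows the set-partitioning principle for `M`-PAM. -/
theorem stmt_10 (m : ℕ) (hm : 2 ≤ m) (Δ : ℝ) (hΔ : 0 < Δ) :
    (∀ l : ℕ, l < m → IsLeast (pamDeltaSet m Δ l) (2 ^ (l + 1) * Δ)) ∧
    (∀ l l' : ℕ, l < l' → l' < m →
      sInf (pamDeltaSet m Δ l) < sInf (pamDeltaSet m Δ l')) := by
  have key : ∀ l : ℕ, l < m → IsLeast (pamDeltaSet m Δ l) (2 ^ (l + 1) * Δ) := by
    intro l hl
    constructor
    · -- membership: take q = 0, q' = 2^l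
      refine ⟨⟨0, by positivity⟩, ⟨2 ^ l, Nat.pow_lt_pow_right (by norm_num) hl⟩, ?_, ?_, ?_⟩
      · intro h
        have := congrArg Fin.val h
        simp at this
        exact absurd this.symm (by positivity : (0:ℕ) < 2 ^ l).ne'
      · intro j hj
        have hjm : (j : ℕ) < m := j.isLt
        have hne : m - 1 - (j : ℕ) ≠ l := by omega
        simp [NBC, Nat.testBit_two_pow, hne]
        simp [Ne.symm hne]
      · have h1 : pamPoint m Δ ⟨0, by positivity⟩ -
            pamPoint m Δ ⟨2 ^ l, Nat.pow_lt_pow_right (by norm_num) hl⟩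
            = -(2 ^ (l + 1) * Δ) := by
          simp [pamPoint]
          push_cast
          ring
        rw [h1, abs_neg, abs_of_pos (by positivity)]
    · rintro d ⟨q, q', hne, hagree, rfl⟩
      -- the low l bits of q and q' agree
      have hmod : (q : ℕ) % 2 ^ l = (q' : ℕ) % 2 ^ l := by
        apply Nat.eq_of_testBit_eq
        intro k
        rw [Nat.testBit_mod_two_pow, Nat.testBit_mod_two_pow]
        by_cases hk : k < l
        · have hjlt : m - 1 - k < m := by omega
          have hj : m - l ≤ ((⟨m - 1 - k, hjlt⟩ : Fin m) : ℕ) := by simp; omega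
          have := hagree ⟨m - 1 - k, hjlt⟩ hj
          simp only [NBC] at this
          have hkk : m - 1 - ((⟨m - 1 - k, hjlt⟩ : Fin m) : ℕ) = k := by simp; omega
          rw [hkk] at this
          rw [(ite_zmod_eq_iff _ _).mp this]
        · simp [hk]
      have hdvd : ((2 : ℤ) ^ l) ∣ ((q' : ℕ) : ℤ) - ((q : ℕ) : ℤ) := by
        have := (Nat.modEq_iff_dvd (a := (q : ℕ)) (b := (q' : ℕ)) (n := 2 ^ l)).mp hmod
        exact_mod_cast this
      have hsub_ne : ((q' : ℕ) : ℤ) - ((q : ℕ) : ℤ) ≠ 0 := by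
        intro h
        apply hne
        apply Fin.ext
        omega
      have hle : (2 : ℤ) ^ l ≤ |((q' : ℕ) : ℤ) - ((q : ℕ) : ℤ)| :=
        Int.le_of_dvd (abs_pos.mpr hsub_ne) ((dvd_abs _ _).mpr hdvd)
      have hleR : (2 : ℝ) ^ l ≤ |((q' : ℕ) : ℝ) - ((q : ℕ) : ℝ)| := by
        exact_mod_cast hle
      have h2 : pamPoint m Δ q - pamPoint m Δ q'
          = 2 * (((q : ℕ) : ℝ) - ((q' : ℕ) : ℝ)) * Δ := by
        simp [pamPoint]; ring
      rw [h2, abs_mul, abs_mul, abs_of_pos hΔ, abs_two, abs_sub_comm]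
      rw [pow_succ, mul_comm ((2:ℝ)^l) 2, mul_assoc, mul_assoc]
      have : (2:ℝ) ^ l * Δ ≤ |((q' : ℕ) : ℝ) - ((q : ℕ) : ℝ)| * Δ :=
        mul_le_mul_of_nonneg_right hleR hΔ.le
      linarith
  refine ⟨key, ?_⟩
  intro l l' hll' hl'
  rw [(key l (hll'.trans hl')).csInf_eq, (key l' hl').csInf_eq]
  have : (2:ℝ) ^ (l + 1) < 2 ^ (l' + 1) := by
    apply pow_lt_pow_right₀ (by norm_num) (by omega)
  exact mul_lt_mul_of_pos_right this hΔ
end
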